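/- arXiv:2509.16712 — 2 statements merged into one kernel-verified Lean document; each statement's English description precedes it below -/
import Mathlib

section
/- Let h₁ be a positive continuous function on S² with max h₁ = M₁, ε > 0, and suppose (u,ψ) satisfies 4π = ∫(h₁e^{2u} + h₂e^u|ψ|²)dv with h₂ bounded and ‖ψ‖_{H^{1/2}} controlling ‖ψ‖_{L⁴}. Then, using Young's inequality h₂e^u|ψ|² ≤ C_ε e^{2u} + ε|ψ|⁴, one has 4π ≤ (M₁ + C_ε)∫e^{2u}dv + ε‖ψ‖⁴_{H^{1/2}}; combined with the Moser–Trudinger inequality ∫e^{2u}dv ≤ 4π·exp((1/4π)∫(|∇u|² + 2u)dv), if ε‖ψ‖⁴_{H^{1/2}} < 4π this yields the lower bound (1/4π)∫(|∇u|² + 2u)dv ≥ log((4π − ε‖ψ‖⁴_{H^{1/2}})/(4π(M₁ + C_ε))). -/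
open MeasureTheory Real

/-- Lemma 4.2 (lower bound of the functional on the constraint): from the mass
identity `4π = ∫(h₁e^{2u} + h₂e^u|ψ|²)`, Young's inequality
`h₂e^u|ψ|² ≤ C_ε e^{2u} + ε|ψ|⁴`, `h₁ ≤ M₁`, `∫|ψ|⁴ ≤ P = ‖ψ‖⁴_{H^{1/2}}` and the
Moser–Trudinger inequality, if `εP < 4π` then
`4π ≤ (M₁+C_ε)∫e^{2u} + εP` and
`(1/4π)∫(|∇u|²+2u) ≥ log((4π − εP)/(4π(M₁+C_ε)))`. Here `s = |ψ|²`. -/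
theorem stmt_18 {X : Type*} [MeasurableSpace X] (μ : Measure X)
    (u gradSq h1 h2 s : X → ℝ) (M1 ε Cε P : ℝ)
    (hε : 0 < ε) (hP : 0 ≤ P)
    (hs : ∀ x, 0 ≤ s x)
    (hh1 : ∀ x, h1 x ≤ M1)
    (hh1pos : ∀ x, 0 < h1 x)
    (hmass : 4 * Real.pi
      = ∫ x, (h1 x * Real.exp (2 * u x) + h2 x * Real.exp (u x) * s x) ∂μ)
    (hyoung : ∀ x, h2 x * Real.exp (u x) * s x
      ≤ Cε * Real.exp (2 * u x) + ε * (s x) ^ 2)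
    (hs4 : ∫ x, (s x) ^ 2 ∂μ ≤ P)
    (hMT : ∫ x, Real.exp (2 * u x) ∂μ
      ≤ 4 * Real.pi * Real.exp ((1 / (4 * Real.pi)) * ∫ x, (gradSq x + 2 * u x) ∂μ))
    (hεP : ε * P < 4 * Real.pi)
    (hint1 : Integrable (fun x => h1 x * Real.exp (2 * u x)) μ)
    (hint2 : Integrable (fun x => h2 x * Real.exp (u x) * s x) μ)
    (hintE : Integrable (fun x => Real.exp (2 * u x)) μ)
    (hints : Integrable (fun x => (s x) ^ 2) μ)
    (hintg : Integrable (fun x => gradSq x + 2 * u x) μ) :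
    4 * Real.pi ≤ (M1 + Cε) * (∫ x, Real.exp (2 * u x) ∂μ) + ε * P ∧
    (1 / (4 * Real.pi)) * ∫ x, (gradSq x + 2 * u x) ∂μ
      ≥ Real.log ((4 * Real.pi - ε * P) / (4 * Real.pi * (M1 + Cε))) := by
  have hI0 : 0 ≤ ∫ x, Real.exp (2 * u x) ∂μ :=
    integral_nonneg fun x => (Real.exp_pos _).le
  have hA : ∫ x, h1 x * Real.exp (2 * u x) ∂μ ≤ M1 * ∫ x, Real.exp (2 * u x) ∂μ := by
    rw [← integral_const_mul]
    exact integral_mono hint1 (hintE.const_mul M1) fun x =>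
      mul_le_mul_of_nonneg_right (hh1 x) (Real.exp_pos _).le
  have hB : ∫ x, h2 x * Real.exp (u x) * s x ∂μ
      ≤ Cε * (∫ x, Real.exp (2 * u x) ∂μ) + ε * P := by
    have h := integral_mono hint2 ((hintE.const_mul Cε).add (hints.const_mul ε)) hyoung
    simp only [Pi.add_apply] at h
    rw [integral_add (hintE.const_mul Cε) (hints.const_mul ε),
      integral_const_mul, integral_const_mul] at h
    have h2' : ε * ∫ x, (s x) ^ 2 ∂μ ≤ ε * P := mul_le_mul_of_nonneg_left hs4 hε.le
    linarith
  have hmain : 4 * Real.pi ≤ (M1 + Cε) * (∫ x, Real.exp (2 * u x) ∂μ) + ε * P := by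
    rw [hmass, integral_add hint1 hint2]; nlinarith
  refine ⟨hmain, ?_⟩
  have hpos : 0 < 4 * Real.pi - ε * P := by linarith
  have hMCI : 0 < (M1 + Cε) * ∫ x, Real.exp (2 * u x) ∂μ := by linarith
  have hMC : 0 < M1 + Cε := by
    by_contra h
    push_neg at h
    have := mul_nonpos_of_nonpos_of_nonneg h hI0
    linarith
  rw [ge_iff_le, Real.log_le_iff_le_exp (by positivity),
    div_le_iff₀ (by positivity)]
  have h2 : (M1 + Cε) * (∫ x, Real.exp (2 * u x) ∂μ)
      ≤ (M1 + Cε) * (4 * Real.pi * Real.exp ((1 / (4 * Real.pi)) * ∫ x, (gradSq x + 2 * u x) ∂μ)) :=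
    mul_le_mul_of_nonneg_left hMT hMC.le
  nlinarith [Real.exp_pos ((1 / (4 * Real.pi)) * ∫ x, (gradSq x + 2 * u x) ∂μ)]
end

section
/- Suppose h₂ > 0 is a constant, λ_i is an eigenvalue of the Dirac operator D̸ on (S², g₀) with eigenspinor φ_i, and set e^{ū} = λ_i/h₂ with u ≡ ū constant and ψ = cφ_i for some c ∈ ℝ. If (u,ψ) solves −Δu = h₁e^{2u} − 1 + h₂e^u|ψ|², D̸ψ = h₂e^uψ with c ≠ 0, then |φ_i|² = (1/c²)(1/λ_i − λ_i h₁/h₂²) pointwise; since |φ_i|² ≥ 0 and the first positive Dirac eigenvalue on S² is 1, necessarily h₁(x) ≤ h₂² everywhere. -/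
open Real

/-- Constant-scalar solutions of the super-Liouville system on the round sphere:
if `h₂ > 0` is constant, `λᵢ ≥ 1` is a (positive) Dirac eigenvalue (the first
positive eigenvalue on `S²` being `1`), `e^{ū} = λᵢ/h₂`, `u ≡ ū` and `ψ = cφᵢ`
with `c ≠ 0` solve `0 = h₁e^{2ū} − 1 + h₂e^{ū}|ψ|²` (the scalar equation with
`Δu = 0`), then `|φᵢ|² = (1/c²)(1/λᵢ − λᵢh₁/h₂²)` pointwise; since `|φᵢ|² ≥ 0`,
necessarily `h₁(x) ≤ h₂²` everywhere. Here `s = |φᵢ|²`. -/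
theorem stmt_19 {X : Type*} (lami h2 c ubar : ℝ) (h1 s : X → ℝ)
    (hlam : 1 ≤ lami) (hh2 : 0 < h2) (hc : c ≠ 0)
    (hub : Real.exp ubar = lami / h2)
    (hs : ∀ x, 0 ≤ s x)
    (heq : ∀ x, (0 : ℝ) = h1 x * Real.exp (2 * ubar) - 1
      + h2 * Real.exp ubar * (c ^ 2 * s x)) :
    (∀ x, s x = (1 / c ^ 2) * (1 / lami - lami * h1 x / h2 ^ 2)) ∧
    (∀ x, h1 x ≤ h2 ^ 2) := by
  have hl : (0:ℝ) < lami := lt_of_lt_of_le one_pos hlam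
  have hc2 : (0:ℝ) < c ^ 2 := pow_pos (abs_pos.mpr hc) 2 |>.trans_le (by rw [sq_abs])
  have hexp2 : Real.exp (2 * ubar) = (lami / h2) ^ 2 := by
    rw [two_mul, Real.exp_add, hub]; ring
  have key : ∀ x, s x = (1 / c ^ 2) * (1 / lami - lami * h1 x / h2 ^ 2) := by
    intro x
    have h := heq x
    rw [hexp2, hub] at h
    field_simp at h ⊢
    nlinarith [h, sq_nonneg c, sq_nonneg h2, sq_nonneg lami]
  refine ⟨key, fun x => ?_⟩
  have h0 := hs x
  rw [key x] at h0
  have h1' : 0 ≤ 1 / lami - lami * h1 x / h2 ^ 2 :=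
    nonneg_of_mul_nonneg_right (by linarith) (one_div_pos.mpr hc2)
  have : lami * h1 x / h2 ^ 2 ≤ 1 / lami := by linarith
  have h2sq : (0:ℝ) < h2 ^ 2 := pow_pos hh2 2
  rw [div_le_div_iff₀ h2sq hl] at this
  nlinarith [sq_nonneg (lami - 1), sq_nonneg h2]
end
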